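/- arXiv:2109.12615 — 6 statements merged into one kernel-verified Lean document; each statement's English description precedes it below -/
import Mathlib

section
/- In a complete lattice L with a commutator operation as above, if a ⊔ b = ⊤ and a ⊔ c = ⊤ then a ⊔ [b,c] = ⊤ and a ⊔ (b ⊓ c) = ⊤. -/
theorem stmt_1 {L : Type*} [CompleteLattice L] (cc : L → L → L)
    (hcomm : ∀ a b, cc a b = cc b a)
    (hmono : ∀ a₁ a₂ b, a₁ ≤ a₂ → cc a₁ b ≤ cc a₂ b)
    (hle : ∀ a b, cc a b ≤ a ⊓ b)
    (hdist : ∀ (s : Set L) (b : L), cc (sSup s) b = ⨆ a ∈ s, cc a b)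
    (htop : cc ⊤ ⊤ = ⊤)
    (a b c : L) (hab : a ⊔ b = ⊤) (hac : a ⊔ c = ⊤) :
    a ⊔ cc b c = ⊤ ∧ a ⊔ (b ⊓ c) = ⊤ := by
  have hsup : ∀ x y z : L, cc (x ⊔ y) z = cc x z ⊔ cc y z := by
    intro x y z
    have := hdist {x, y} z
    rw [sSup_pair, iSup_pair] at this; exact this
  have h1 : a ⊔ cc b c = ⊤ := by
    have key : (⊤ : L) = cc a a ⊔ cc b a ⊔ (cc a c ⊔ cc b c) := by
      calc (⊤ : L) = cc (a ⊔ b) (a ⊔ c) := by rw [hab, hac, htop]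
        _ = cc (a ⊔ b) a ⊔ cc (a ⊔ b) c := by
            rw [hcomm (a ⊔ b) (a ⊔ c), hsup, hcomm a (a ⊔ b), hcomm c (a ⊔ b)]
        _ = cc a a ⊔ cc b a ⊔ (cc a c ⊔ cc b c) := by rw [hsup, hsup]
    have hbound : cc a a ⊔ cc b a ⊔ (cc a c ⊔ cc b c) ≤ a ⊔ cc b c := by
      have h1 : cc a a ≤ a := (hle a a).trans inf_le_left
      have h2 : cc b a ≤ a := (hle b a).trans inf_le_right
      have h3 : cc a c ≤ a := (hle a c).trans inf_le_left
      exact sup_le (sup_le (h1.trans le_sup_left) (h2.trans le_sup_left))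
        (sup_le (h3.trans le_sup_left) le_sup_right)
    exact top_le_iff.mp (key ▸ hbound)
  refine ⟨h1, top_le_iff.mp ?_⟩
  calc (⊤ : L) = a ⊔ cc b c := h1.symm
    _ ≤ a ⊔ (b ⊓ c) := sup_le_sup_left (hle b c) a
end

section
/- In a complete lattice L with a commutator operation as above, define a^1 = [a,a] and a^{n+1} = [a^n, a^n]. If a ⊔ b = ⊤ then a^n ⊔ b^n = ⊤ for every positive integer n. -/
/-- Iterated commutator power: `cpow c a 0 = a`, `cpow c a (n+1) = c (cpow c a n) (cpow c a n)`,
so `cpow c a 1 = [a,a]`. -/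
def cpow {L : Type*} (c : L → L → L) (a : L) : ℕ → L
  | 0 => a
  | n + 1 => c (cpow c a n) (cpow c a n)

theorem stmt_2 {L : Type*} [CompleteLattice L] (c : L → L → L)
    (hcomm : ∀ a b, c a b = c b a)
    (hmono : ∀ a₁ a₂ b, a₁ ≤ a₂ → c a₁ b ≤ c a₂ b)
    (hle : ∀ a b, c a b ≤ a ⊓ b)
    (hdist : ∀ (s : Set L) (b : L), c (sSup s) b = ⨆ x ∈ s, c x b)
    (htop : c ⊤ ⊤ = ⊤)
    (a b : L) (hab : a ⊔ b = ⊤) :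
    ∀ n : ℕ, 0 < n → cpow c a n ⊔ cpow c b n = ⊤ := by
  have hpair : ∀ u v w : L, c (u ⊔ v) w = c u w ⊔ c v w := by
    intro u v w
    rw [← sSup_pair, hdist, iSup_pair]
  have key : ∀ x y : L, x ⊔ y = ⊤ → c x x ⊔ y = ⊤ := by
    intro x y hxy
    have h1 : (⊤ : L) = (c x x ⊔ c y x) ⊔ (c x y ⊔ c y y) := by
      rw [← htop, ← hxy, hpair, hcomm x (x ⊔ y), hcomm y (x ⊔ y), hpair, hpair]
    have h2 : (⊤ : L) ≤ c x x ⊔ y := by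
      rw [h1]
      have hyx : c y x ≤ y := (hle y x).trans inf_le_left
      have hxy' : c x y ≤ y := (hle x y).trans inf_le_right
      have hyy : c y y ≤ y := (hle y y).trans inf_le_left
      exact sup_le (sup_le le_sup_left (hyx.trans le_sup_right))
        (sup_le (hxy'.trans le_sup_right) (hyy.trans le_sup_right))
    exact top_le_iff.mp h2
  have main : ∀ n : ℕ, cpow c a n ⊔ cpow c b n = ⊤ := by
    intro n
    induction n with
    | zero => exact hab
    | succ n ih =>
      have h1 : c (cpow c a n) (cpow c a n) ⊔ cpow c b n = ⊤ := key _ _ ih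
      have h2 : c (cpow c b n) (cpow c b n) ⊔ c (cpow c a n) (cpow c a n) = ⊤ := by
        apply key
        rw [sup_comm]; exact h1
      rw [cpow, cpow, sup_comm]; exact h2
  intro n _
  exact main n
end

section
/- In a complete lattice L with a commutator operation, an element φ < ⊤ is prime if [a,b] ≤ φ implies a ≤ φ or b ≤ φ. Define ρ(θ) as the meet of all primes above θ. Then ρ(a ⊓ b) = ρ([a,b]) = ρ(a) ⊓ ρ(b). -/
/-- `φ` is a prime element with respect to the commutator `c`. -/
def IsPrimeElem {L : Type*} [CompleteLattice L] (c : L → L → L) (φ : L) : Prop :=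
  φ ≠ ⊤ ∧ ∀ a b, c a b ≤ φ → a ≤ φ ∨ b ≤ φ

/-- The radical of `θ`: the meet of all primes above `θ`. -/
def rad {L : Type*} [CompleteLattice L] (c : L → L → L) (θ : L) : L :=
  sInf {φ | IsPrimeElem c φ ∧ θ ≤ φ}

theorem stmt_3 {L : Type*} [CompleteLattice L] (c : L → L → L)
    (hcomm : ∀ a b, c a b = c b a)
    (hmono : ∀ a₁ a₂ b, a₁ ≤ a₂ → c a₁ b ≤ c a₂ b)
    (hle : ∀ a b, c a b ≤ a ⊓ b)
    (hdist : ∀ (s : Set L) (b : L), c (sSup s) b = ⨆ x ∈ s, c x b)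
    (htop : c ⊤ ⊤ = ⊤)
    (hprime : ∀ a : L, a ≠ ⊤ → ∃ φ, IsPrimeElem c φ ∧ a ≤ φ)
    (a b : L) :
    rad c (a ⊓ b) = rad c (c a b) ∧ rad c (a ⊓ b) = rad c a ⊓ rad c b := by
  have hset : {φ | IsPrimeElem c φ ∧ a ⊓ b ≤ φ} = {φ | IsPrimeElem c φ ∧ c a b ≤ φ} := by
    ext φ
    constructor
    · rintro ⟨hp, h⟩
      exact ⟨hp, le_trans (hle a b) h⟩
    · rintro ⟨hp, h⟩
      refine ⟨hp, ?_⟩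
      rcases hp.2 a b h with h' | h'
      · exact le_trans inf_le_left h'
      · exact le_trans inf_le_right h'
  have h1 : rad c (a ⊓ b) = rad c (c a b) := by
    unfold rad; rw [hset]
  refine ⟨h1, ?_⟩
  apply le_antisymm
  · apply le_inf
    · exact le_sInf fun φ ⟨hp, h⟩ => sInf_le ⟨hp, le_trans inf_le_left h⟩
    · exact le_sInf fun φ ⟨hp, h⟩ => sInf_le ⟨hp, le_trans inf_le_right h⟩
  · rw [h1]
    refine le_sInf fun φ ⟨hp, h⟩ => ?_
    rcases hp.2 a b h with h' | h'
    · exact le_trans inf_le_left (sInf_le ⟨hp, h'⟩)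
    · exact le_trans inf_le_right (sInf_le ⟨hp, h'⟩)
end

section
/- The set of radical elements RCon = {a | ρ(a) = a}, with meets given by ⊓ and joins given by a ∨· b = ρ(a ⊔ b), forms a frame (binary meet distributes over arbitrary joins). -/
lemma rad_mono {L : Type*} [CompleteLattice L] (c : L → L → L) {a b : L} (h : a ≤ b) :
    rad c a ≤ rad c b :=
  sInf_le_sInf fun φ hφ => ⟨hφ.1, h.trans hφ.2⟩

lemma le_rad {L : Type*} [CompleteLattice L] (c : L → L → L) (a : L) : a ≤ rad c a :=
  le_sInf fun _ hφ => hφ.2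

lemma rad_rad {L : Type*} [CompleteLattice L] (c : L → L → L) (a : L) :
    rad c (rad c a) = rad c a := by
  refine le_antisymm (sInf_le_sInf fun φ hφ => ⟨hφ.1, sInf_le ⟨hφ.1, hφ.2⟩⟩)
    (rad_mono c (le_rad c a))

lemma rad_c {L : Type*} [CompleteLattice L] (c : L → L → L)
    (hle : ∀ a b, c a b ≤ a ⊓ b) (a b : L) :
    rad c (c a b) = rad c (a ⊓ b) := by
  refine le_antisymm (rad_mono c (hle a b)) (sInf_le_sInf ?_)
  rintro φ ⟨hφ, hcab⟩
  refine ⟨hφ, ?_⟩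
  rcases hφ.2 a b hcab with h | h
  · exact inf_le_left.trans h
  · exact inf_le_right.trans h

lemma rad_inf {L : Type*} [CompleteLattice L] (c : L → L → L)
    (hle : ∀ a b, c a b ≤ a ⊓ b) (a b : L) :
    rad c (a ⊓ b) = rad c a ⊓ rad c b := by
  refine le_antisymm (le_inf (rad_mono c inf_le_left) (rad_mono c inf_le_right)) ?_
  refine le_sInf ?_
  rintro φ ⟨hφ, hab⟩
  rcases hφ.2 a b ((hle a b).trans hab) with h | h
  · exact inf_le_left.trans (sInf_le ⟨hφ, h⟩)
  · exact inf_le_right.trans (sInf_le ⟨hφ, h⟩)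

/-- The frame law in the lattice of radical elements: binary meet distributes over the
joins `⨆· a_i = rad (⨆ a_i)`. -/
theorem stmt_8 {L : Type*} [CompleteLattice L] (c : L → L → L)
    (hcomm : ∀ a b, c a b = c b a)
    (hmono : ∀ a₁ a₂ b, a₁ ≤ a₂ → c a₁ b ≤ c a₂ b)
    (hle : ∀ a b, c a b ≤ a ⊓ b)
    (hdist : ∀ (s : Set L) (b : L), c (sSup s) b = ⨆ x ∈ s, c x b)
    (htop : c ⊤ ⊤ = ⊤)
    (hprime : ∀ a : L, a ≠ ⊤ → ∃ φ, IsPrimeElem c φ ∧ a ≤ φ)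
    {ι : Type*} (a : L) (f : ι → L)
    (ha : rad c a = a) (hf : ∀ i, rad c (f i) = f i) :
    a ⊓ rad c (⨆ i, f i) = rad c (⨆ i, a ⊓ f i) := by
  have key : a ⊓ rad c (⨆ i, f i) = rad c (a ⊓ ⨆ i, f i) := by
    rw [rad_inf c hle, ha]
  rw [key]
  refine le_antisymm ?_ ?_
  · rw [← rad_c c hle a (⨆ i, f i)]
    have h1 : c a (⨆ i, f i) = ⨆ i, c (f i) a := by
      rw [hcomm, iSup, hdist, iSup_range]
    rw [h1]
    refine rad_mono c (iSup_le fun i => ?_)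
    exact le_trans ((hle (f i) a).trans (by rw [inf_comm])) (le_iSup (fun i => a ⊓ f i) i)
  · have : (⨆ i, a ⊓ f i) ≤ rad c (a ⊓ ⨆ i, f i) := by
      refine le_trans (iSup_le fun i => le_inf inf_le_left
        (inf_le_right.trans (le_iSup f i))) (le_rad c _)
    calc rad c (⨆ i, a ⊓ f i) ≤ rad c (rad c (a ⊓ ⨆ i, f i)) := rad_mono c this
      _ = rad c (a ⊓ ⨆ i, f i) := rad_rad c _
end

section
/- Every complemented element of L is compact, provided ⊤ is compact in L. -/
theorem stmt_12 {L : Type*} [CompleteLattice L] (c : L → L → L)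
    (hcomm : ∀ a b, c a b = c b a)
    (hmono : ∀ a₁ a₂ b, a₁ ≤ a₂ → c a₁ b ≤ c a₂ b)
    (hle : ∀ a b, c a b ≤ a ⊓ b)
    (hdist : ∀ (s : Set L) (b : L), c (sSup s) b = ⨆ x ∈ s, c x b)
    (hunit : ∀ a, c ⊤ a = a)
    (htopc : IsCompactElement (⊤ : L))
    (e : L) (he : ∃ f, e ⊔ f = ⊤ ∧ c e f = ⊥) :
    IsCompactElement e := by
  obtain ⟨f, hef, hcef⟩ := he
  classical
  rw [CompleteLattice.isCompactElement_iff_exists_le_sSup_of_le_sSup]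
  intro s hs
  have htop : (⊤ : L) ≤ sSup (insert f s) := by
    rw [sSup_insert, ← hef]
    exact sup_le (le_trans hs le_sup_right) le_sup_left
  obtain ⟨t, hts, htsup⟩ := (CompleteLattice.isCompactElement_iff_exists_le_sSup_of_le_sSup _ _).1 htopc _ htop
  refine ⟨t.erase f, ?_, ?_⟩
  · intro x hx
    have hx' := hts (Finset.mem_of_mem_erase hx)
    rcases hx' with h | h
    · exact absurd h (Finset.ne_of_mem_erase hx)
    · exact h
  · have hsup : sSup (↑t : Set L) = ⊤ := le_antisymm le_top (by
      rw [← Finset.sup_id_eq_sSup]; exact htsup)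
    have : e = c (sSup (↑t : Set L)) e := by rw [hsup, hunit]
    rw [this, hdist]
    refine iSup₂_le fun x hx => ?_
    by_cases hxf : x = f
    · subst hxf
      rw [hcomm, hcef]
      exact bot_le
    · calc c x e ≤ x ⊓ e := hle x e
        _ ≤ x := inf_le_left
        _ ≤ (t.erase f).sup id := Finset.le_sup (f := id) (Finset.mem_erase.2 ⟨hxf, hx⟩)
end

section
/- Let B be a Boolean algebra and u : B → B' a Boolean homomorphism that is surjective. If (b_n)_{n∈ℕ} is a sequence in B' with b_n ∧ b_m = ⊥ for n ≠ m, then there exists a sequence (a_n) in B with a_n ∧ a_m = ⊥ for n ≠ m and u(a_n) = b_n for all n. -/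
theorem stmt_16 {B B' : Type*} [BooleanAlgebra B] [BooleanAlgebra B']
    (u : BoundedLatticeHom B B') (hu : Function.Surjective u)
    (b : ℕ → B') (hb : ∀ n m, n ≠ m → b n ⊓ b m = ⊥) :
    ∃ a : ℕ → B, (∀ n m, n ≠ m → a n ⊓ a m = ⊥) ∧ ∀ n, u (a n) = b n := by
  choose c hc using fun n => hu (b n)
  refine ⟨fun n => c n \ (Finset.range n).sup c, ?_, ?_⟩
  · have key : ∀ m n, m < n → (c n \ (Finset.range n).sup c) ⊓
        (c m \ (Finset.range m).sup c) = ⊥ := by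
      intro m n hmn
      have h1 : c m \ (Finset.range m).sup c ≤ c m := sdiff_le
      have h2 : c m ≤ (Finset.range n).sup c :=
        Finset.le_sup (Finset.mem_range.2 hmn)
      refine le_bot_iff.mp ?_
      calc (c n \ (Finset.range n).sup c) ⊓ (c m \ (Finset.range m).sup c)
          ≤ (c n \ (Finset.range n).sup c) ⊓ (Finset.range n).sup c :=
            inf_le_inf_left _ (h1.trans h2)
        _ = ⊥ := disjoint_sdiff_self_left.eq_bot
    intro n m hnm
    rcases hnm.lt_or_gt with h | h
    · rw [inf_comm]; exact key n m h
    · exact key m n h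
  · intro n
    rw [map_sdiff', hc]
    have : u ((Finset.range n).sup c) = (Finset.range n).sup b := by
      rw [map_finset_sup]
      exact Finset.sup_congr rfl fun m _ => hc m
    rw [this]
    have : b n ⊓ (Finset.range n).sup b = ⊥ := by
      rw [Finset.sup_inf_distrib_left]
      exact (Finset.sup_eq_bot_iff _ _).mpr fun m hm => hb n m (Finset.mem_range.1 hm).ne'
    rw [sdiff_eq_self_iff_disjoint.2 (disjoint_iff.2 this).symm]
end
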